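/- arXiv:2411.18991 — 9 statements merged into one kernel-verified Lean document; each statement's English description precedes it below -/
import Mathlib

section
/- Let F be a field and let a, b, c, d, e, f, g, h, i, j, k be elements of F with i ≠ 0, j ≠ 0, k ≠ 0. Define l = (a·j + b·k + c·h)/i, m = (c·f + d·k + e·l)/j, n = (f·a + g·l + h·m)/k, and assume l ≠ 0. Define o = (a·d + b·m + c·n)/l. Then o = (b·e·k + d·i·k + c·g·j + c·f·i + c·e·h)/(j·k). -/
/-- The fourth label of the octagon computation in a field. -/
theorem octagon_o (F : Type*) [Field F] (a b c d e f g h i j k : F)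
    (hi : i ≠ 0) (hj : j ≠ 0) (hk : k ≠ 0)
    (l m n o : F)
    (hl : l = (a * j + b * k + c * h) / i)
    (hm : m = (c * f + d * k + e * l) / j)
    (hn : n = (f * a + g * l + h * m) / k)
    (hl0 : l ≠ 0)
    (ho : o = (a * d + b * m + c * n) / l) :
    o = (b * e * k + d * i * k + c * g * j + c * f * i + c * e * h) / (j * k) := by
  have hli : l * i = a * j + b * k + c * h := by
    rw [hl, div_mul_cancel₀ _ hi]
  have hmj : m * j = c * f + d * k + e * l := by
    rw [hm, div_mul_cancel₀ _ hj]
  have hnk : n * k = f * a + g * l + h * m := by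
    rw [hn, div_mul_cancel₀ _ hk]
  rw [ho, div_eq_div_iff hl0 (mul_ne_zero hj hk)]
  have key : (a * d + b * m + c * n) * (j * k) -
      (b * e * k + d * i * k + c * g * j + c * f * i + c * e * h) * l =
      (-(c * f + d * k)) * (l * i - (a * j + b * k + c * h))
      + (b * k + c * h) * (m * j - (c * f + d * k + e * l))
      + (c * j) * (n * k - (f * a + g * l + h * m)) := by ring
  rw [hli, hmj, hnk] at key
  simp only [sub_self, mul_zero, add_zero] at key
  exact sub_eq_zero.mp key
end

section
/- Let F be a field and let a, b, c, d, e, f, g, h, i, j, k be elements of F with i ≠ 0, j ≠ 0, k ≠ 0. Define l = (a·j + b·k + c·h)/i, m = (c·f + d·k + e·l)/j, n = (f·a + g·l + h·m)/k, and assume l ≠ 0 and n ≠ 0. Define o = (a·d + b·m + c·n)/l, p = (e·h + f·i + g·j)/k, and q = (h·o + a·p + b·g)/n. Then q = i. -/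
/-- In the octagon computation in a field, the sixth flip returns the label `i`. -/
theorem octagon_q (F : Type*) [Field F] (a b c d e f g h i j k : F)
    (hi : i ≠ 0) (hj : j ≠ 0) (hk : k ≠ 0)
    (l m n o p q : F)
    (hl : l = (a * j + b * k + c * h) / i)
    (hm : m = (c * f + d * k + e * l) / j)
    (hn : n = (f * a + g * l + h * m) / k)
    (hl0 : l ≠ 0) (hn0 : n ≠ 0)
    (ho : o = (a * d + b * m + c * n) / l)
    (hp : p = (e * h + f * i + g * j) / k)
    (hq : q = (h * o + a * p + b * g) / n) :
    q = i := by
  rw [eq_div_iff hi] at hl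
  rw [eq_div_iff hj] at hm
  rw [eq_div_iff hk] at hn
  rw [eq_div_iff hl0] at ho
  rw [eq_div_iff hk] at hp
  rw [eq_div_iff hn0] at hq
  have key : (q - i) * (n * l * k) = 0 := by
    linear_combination l*k*hq + h*k*ho + a*l*hp + (c*h - i*l)*hn
      - (g*l + h*m)*hl - h*a*hm
  have hnz : n * l * k ≠ 0 := mul_ne_zero (mul_ne_zero hn0 hl0) hk
  have := (mul_eq_zero.mp key).resolve_right hnz
  exact sub_eq_zero.mp this
end

section
/- Let F be a field and let a, b, c, d, e, f, g, h, i, j, k be elements of F with i ≠ 0, j ≠ 0, k ≠ 0. Define l = (a·j + b·k + c·h)/i, m = (c·f + d·k + e·l)/j, n = (f·a + g·l + h·m)/k, and assume l ≠ 0 and n ≠ 0. Define o = (a·d + b·m + c·n)/l, p = (e·h + f·i + g·j)/k, q = (h·o + a·p + b·g)/n, and assume o ≠ 0. Define r = (b·e + c·p + d·q)/o. Then r = j. -/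
/-- In the octagon computation in a field, the seventh flip returns the label `j`. -/
theorem octagon_r (F : Type*) [Field F] (a b c d e f g h i j k : F)
    (hi : i ≠ 0) (hj : j ≠ 0) (hk : k ≠ 0)
    (l m n o p q r : F)
    (hl : l = (a * j + b * k + c * h) / i)
    (hm : m = (c * f + d * k + e * l) / j)
    (hn : n = (f * a + g * l + h * m) / k)
    (hl0 : l ≠ 0) (hn0 : n ≠ 0)
    (ho : o = (a * d + b * m + c * n) / l)
    (hp : p = (e * h + f * i + g * j) / k)
    (hq : q = (h * o + a * p + b * g) / n)
    (ho0 : o ≠ 0)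
    (hr : r = (b * e + c * p + d * q) / o) :
    r = j := by
  have e1 : l * i = a * j + b * k + c * h := by rw [hl, div_mul_cancel₀ _ hi]
  have e2 : m * j = c * f + d * k + e * l := by rw [hm, div_mul_cancel₀ _ hj]
  have e3 : n * k = f * a + g * l + h * m := by rw [hn, div_mul_cancel₀ _ hk]
  have e4 : o * l = a * d + b * m + c * n := by rw [ho, div_mul_cancel₀ _ hl0]
  have e5 : p * k = e * h + f * i + g * j := by rw [hp, div_mul_cancel₀ _ hk]
  have e6 : q * n = h * o + a * p + b * g := by rw [hq, div_mul_cancel₀ _ hn0]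
  have hM : (i^2*j^2*k^3*l*n) ≠ 0 := by
    exact mul_ne_zero (mul_ne_zero (mul_ne_zero (mul_ne_zero
      (pow_ne_zero 2 hi) (pow_ne_zero 2 hj)) (pow_ne_zero 3 hk)) hl0) hn0
  have key : (b * e + c * p + d * q) * (i^2*j^2*k^3*l*n)
      = (j * o) * (i^2*j^2*k^3*l*n) := by
    linear_combination
      (d*i^2*j^2*k^3*l) * e6
      + (c*i^2*j^2*k^2*l*n + a*d*i^2*j^2*k^2*l) * e5
      + (-(i^2*j^3*k^3*n) + d*h*i^2*j^2*k^3) * e4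
      + (-(c*i^2*j^3*k^2*n) - c*h*i^2*j^3*k*m + c*f*i^3*j^2*k*l
         + c*e*h*i^2*j^2*k*l + c*d*h*i^2*j^2*k^2 - b*i^2*j^3*k^2*m
         + b*e*i^2*j^2*k^2*l - a*d*i^2*j^3*k^2 - a*c*f*i^2*j^3*k) * e3
      + (-(c*h^2*i^2*j^2*k*m) - c*g*h*i^2*j^2*k*l + c*f*h*i^3*j*k*l
         - c^2*f*h^2*i^2*j*k - b*h*i^2*j^2*k^2*m - b*g*i^2*j^2*k^2*l
         - b*c*f*h*i^2*j*k^2 - a*d*h*i^2*j^2*k^2 - 2*a*c*f*h*i^2*j^2*k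
         - a*b*f*i^2*j^2*k^2) * e2
      + (c*f*g*i^2*j^2*k*l + c*e*f*h*i^2*j*k*l + c*d*f*h*i^2*j*k^2
         + c^2*f^2*h*i^2*j*k + a*d*f*i^2*j^2*k^2 + a*c*f^2*i^2*j^2*k) * e1
  have h2 : b * e + c * p + d * q = j * o := mul_right_cancel₀ hM key
  rw [hr, h2, mul_div_cancel_right₀ _ ho0]
end

section
/- Let F be a field and let a, b, c, d, e, f, g, h, i, j, k be elements of F with i ≠ 0, j ≠ 0, k ≠ 0. Define l = (a·j + b·k + c·h)/i, m = (c·f + d·k + e·l)/j, n = (f·a + g·l + h·m)/k, and assume l ≠ 0 and n ≠ 0. Define o = (a·d + b·m + c·n)/l, p = (e·h + f·i + g·j)/k, q = (h·o + a·p + b·g)/n, and assume o ≠ 0 and p ≠ 0. Define r = (b·e + c·p + d·q)/o and s = (e·h + f·q + g·r)/p. Then s = k (and together with q = i and r = j this establishes the octagon relation for the Desargues transformation in a field). -/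
/-- In the octagon computation in a field, the eighth flip returns the label `k`,
establishing the octagon relation for the Desargues transformation. -/
theorem octagon_s (F : Type*) [Field F] (a b c d e f g h i j k : F)
    (hi : i ≠ 0) (hj : j ≠ 0) (hk : k ≠ 0)
    (l m n o p q r s : F)
    (hl : l = (a * j + b * k + c * h) / i)
    (hm : m = (c * f + d * k + e * l) / j)
    (hn : n = (f * a + g * l + h * m) / k)
    (hl0 : l ≠ 0) (hn0 : n ≠ 0)
    (ho : o = (a * d + b * m + c * n) / l)
    (hp : p = (e * h + f * i + g * j) / k)
    (hq : q = (h * o + a * p + b * g) / n)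
    (ho0 : o ≠ 0) (hp0 : p ≠ 0)
    (hr : r = (b * e + c * p + d * q) / o)
    (hs : s = (e * h + f * q + g * r) / p) :
    s = k := by
  have hL : l * i = a * j + b * k + c * h := by rw [hl]; field_simp
  have hM : m * j = c * f + d * k + e * l := by rw [hm]; field_simp
  have hN : n * k = f * a + g * l + h * m := by rw [hn]; field_simp
  have hO : o * l = a * d + b * m + c * n := by rw [ho]; field_simp
  have hP : p * k = e * h + f * i + g * j := by rw [hp]; field_simp
  have hQ : q * n = h * o + a * p + b * g := by rw [hq]; field_simp
  have hR : r * o = b * e + c * p + d * q := by rw [hr]; field_simp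
  have hS : s * p = e * h + f * q + g * r := by rw [hs]; field_simp
  have hqi : q = i := by
    apply mul_right_cancel₀ (mul_ne_zero (mul_ne_zero hn0 hl0) hk)
    linear_combination l*k*hQ + h*k*hO + a*l*hP - (a*j+b*k)*hN + (a*f-n*k)*hL - a*h*hM
  have hrj : r = j := by
    apply mul_right_cancel₀ (mul_ne_zero (mul_ne_zero ho0 hk) hl0)
    linear_combination k*l*hR + c*l*hP + d*k*l*hqi + (d*k+c*f)*hL - j*k*hO - (b*k+c*h)*hM - c*j*hN
  apply mul_right_cancel₀ hp0
  linear_combination hS + f*hqi + g*hrj - hP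
end

section
/- Let a, b, c, d, e, f, g, h, i, j, k be real numbers. Define l = max(a + j, b + k, c + h) - i, m = max(c + f, d + k, e + l) - j, n = max(f + a, g + l, h + m) - k, and o = max(a + d, b + m, c + n) - l. Then o = max(b + e + k, d + i + k, c + g + j, c + f + i, c + e + h) - (j + k). -/
/-- The fourth label of the tropical octagon computation over ℝ. -/
theorem tropical_octagon_o (a b c d e f g h i j k l m n o : ℝ)
    (hl : l = max (a + j) (max (b + k) (c + h)) - i)
    (hm : m = max (c + f) (max (d + k) (e + l)) - j)
    (hn : n = max (f + a) (max (g + l) (h + m)) - k)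
    (ho : o = max (a + d) (max (b + m) (c + n)) - l) :
    o = max (b + e + k) (max (d + i + k) (max (c + g + j) (max (c + f + i) (c + e + h))))
          - (j + k) := by
  set R := max (b + e + k) (max (d + i + k) (max (c + g + j) (max (c + f + i) (c + e + h)))) with hR
  have r1 : b + e + k ≤ R := le_max_left _ _
  have r2 : d + i + k ≤ R := le_trans (le_max_left _ _) (le_max_right _ _)
  have r3 : c + g + j ≤ R := le_trans (le_trans (le_max_left _ _) (le_max_right _ _)) (le_max_right _ _)
  have r4 : c + f + i ≤ R := le_trans (le_trans (le_trans (le_max_left _ _) (le_max_right _ _)) (le_max_right _ _)) (le_max_right _ _)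
  have r5 : c + e + h ≤ R := le_trans (le_trans (le_trans (le_max_right _ _) (le_max_right _ _)) (le_max_right _ _)) (le_max_right _ _)
  -- lower bounds on l
  have l1 : a + j ≤ l + i := by
    have := le_max_left (a + j) (max (b + k) (c + h)); linarith [hl]
  have l2 : b + k ≤ l + i := by
    have := le_trans (le_max_left (b + k) (c + h)) (le_max_right (a + j) _); linarith [hl]
  have l3 : c + h ≤ l + i := by
    have := le_trans (le_max_right (b + k) (c + h)) (le_max_right (a + j) _); linarith [hl]
  -- lower bounds from hm, hn, ho
  have m1 : c + f ≤ m + j := by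
    have := le_max_left (c + f) (max (d + k) (e + l)); linarith [hm]
  have m2 : d + k ≤ m + j := by
    have := le_trans (le_max_left (d + k) (e + l)) (le_max_right (c + f) _); linarith [hm]
  have m3 : e + l ≤ m + j := by
    have := le_trans (le_max_right (d + k) (e + l)) (le_max_right (c + f) _); linarith [hm]
  have n1 : f + a ≤ n + k := by
    have := le_max_left (f + a) (max (g + l) (h + m)); linarith [hn]
  have n2 : g + l ≤ n + k := by
    have := le_trans (le_max_left (g + l) (h + m)) (le_max_right (f + a) _); linarith [hn]
  have n3 : h + m ≤ n + k := by
    have := le_trans (le_max_right (g + l) (h + m)) (le_max_right (f + a) _); linarith [hn]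
  have o1 : a + d ≤ o + l := by
    have := le_max_left (a + d) (max (b + m) (c + n)); linarith [ho]
  have o2 : b + m ≤ o + l := by
    have := le_trans (le_max_left (b + m) (c + n)) (le_max_right (a + d) _); linarith [ho]
  have o3 : c + n ≤ o + l := by
    have := le_trans (le_max_right (b + m) (c + n)) (le_max_right (a + d) _); linarith [ho]
  apply le_antisymm
  · -- o ≤ R - (j+k): split the exact values of m, n, o
    rcases max_cases (c + f) (max (d + k) (e + l)) with ⟨em, _⟩ | ⟨em, _⟩ <;>
    rcases max_cases (d + k) (e + l) with ⟨em2, _⟩ | ⟨em2, _⟩ <;>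
    rcases max_cases (f + a) (max (g + l) (h + m)) with ⟨en, _⟩ | ⟨en, _⟩ <;>
    rcases max_cases (g + l) (h + m) with ⟨en2, _⟩ | ⟨en2, _⟩ <;>
    rcases max_cases (a + d) (max (b + m) (c + n)) with ⟨eo, _⟩ | ⟨eo, _⟩ <;>
    rcases max_cases (b + m) (c + n) with ⟨eo2, _⟩ | ⟨eo2, _⟩ <;>
    rw [em2] at em hm <;> rw [en2] at en hn <;> rw [eo2] at eo ho <;>
    rw [em] at hm <;> rw [en] at hn <;> rw [eo] at ho <;>
    linarith
  · -- R - (j+k) ≤ o : split the exact value of l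
    rw [hR, sub_le_iff_le_add, max_le_iff, max_le_iff, max_le_iff, max_le_iff]
    rcases max_cases (a + j) (max (b + k) (c + h)) with ⟨el, _⟩ | ⟨el, _⟩ <;>
    rcases max_cases (b + k) (c + h) with ⟨el2, _⟩ | ⟨el2, _⟩ <;>
    rw [el2] at el hl <;> rw [el] at hl <;>
    refine ⟨by linarith, by linarith, by linarith, by linarith, by linarith⟩
end

section
/- Let a, b, c, d, e, f, g, h, i, j, k be real numbers. Define l = max(a + j, b + k, c + h) - i, m = max(c + f, d + k, e + l) - j, n = max(f + a, g + l, h + m) - k, o = max(a + d, b + m, c + n) - l, p = max(e + h, f + i, g + j) - k, and q = max(h + o, a + p, b + g) - n. Then q = i. -/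
set_option maxHeartbeats 4000000 in
lemma max3_cases' {x y z w : ℝ} (h : w = max x (max y z)) :
    (w = x ∧ y ≤ x ∧ z ≤ x) ∨ (w = y ∧ x ≤ y ∧ z ≤ y) ∨ (w = z ∧ x ≤ z ∧ y ≤ z) := by
  simp only [max_def] at h
  split_ifs at h <;>
    first
    | exact Or.inl ⟨h, by linarith, by linarith⟩
    | exact Or.inr (Or.inl ⟨h, by linarith, by linarith⟩)
    | exact Or.inr (Or.inr ⟨h, by linarith, by linarith⟩)

set_option maxHeartbeats 8000000 in
/-- In the tropical octagon computation over ℝ, the sixth flip returns the label `i`. -/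
theorem tropical_octagon_q (a b c d e f g h i j k l m n o p q : ℝ)
    (hl : l = max (a + j) (max (b + k) (c + h)) - i)
    (hm : m = max (c + f) (max (d + k) (e + l)) - j)
    (hn : n = max (f + a) (max (g + l) (h + m)) - k)
    (ho : o = max (a + d) (max (b + m) (c + n)) - l)
    (hp : p = max (e + h) (max (f + i) (g + j)) - k)
    (hq : q = max (h + o) (max (a + p) (b + g)) - n) :
    q = i := by
  have Hl := max3_cases' (show l + i = max (a + j) (max (b + k) (c + h)) by linarith)
  have Hm := max3_cases' (show m + j = max (c + f) (max (d + k) (e + l)) by linarith)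
  have Hn := max3_cases' (show n + k = max (f + a) (max (g + l) (h + m)) by linarith)
  have Ho := max3_cases' (show o + l = max (a + d) (max (b + m) (c + n)) by linarith)
  have Hp := max3_cases' (show p + k = max (e + h) (max (f + i) (g + j)) by linarith)
  have Hq := max3_cases' (show q + n = max (h + o) (max (a + p) (b + g)) by linarith)
  clear hl hm hn ho hp hq
  rcases Hl with ⟨e1,l1,l2⟩|⟨e1,l1,l2⟩|⟨e1,l1,l2⟩ <;>
  rcases Hm with ⟨e2,m1,m2⟩|⟨e2,m1,m2⟩|⟨e2,m1,m2⟩ <;>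
  rcases Hn with ⟨e3,n1,n2⟩|⟨e3,n1,n2⟩|⟨e3,n1,n2⟩ <;>
  rcases Ho with ⟨e4,o1,o2⟩|⟨e4,o1,o2⟩|⟨e4,o1,o2⟩ <;>
  rcases Hp with ⟨e5,p1,p2⟩|⟨e5,p1,p2⟩|⟨e5,p1,p2⟩ <;>
  rcases Hq with ⟨e6,q1,q2⟩|⟨e6,q1,q2⟩|⟨e6,q1,q2⟩ <;>
  linarith
end

section
/- Let a, b, c, d, e, f, g, h, i, j, k be real numbers. Define l = max(a + j, b + k, c + h) - i, m = max(c + f, d + k, e + l) - j, n = max(f + a, g + l, h + m) - k, o = max(a + d, b + m, c + n) - l, p = max(e + h, f + i, g + j) - k, q = max(h + o, a + p, b + g) - n, and r = max(b + e, c + p, d + q) - o. Then r = j. -/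
set_option maxHeartbeats 4000000 in

/-- In the tropical octagon computation over ℝ, the seventh flip returns the label `j`. -/
theorem tropical_octagon_r (a b c d e f g h i j k l m n o p q r : ℝ)
    (hl : l = max (a + j) (max (b + k) (c + h)) - i)
    (hm : m = max (c + f) (max (d + k) (e + l)) - j)
    (hn : n = max (f + a) (max (g + l) (h + m)) - k)
    (ho : o = max (a + d) (max (b + m) (c + n)) - l)
    (hp : p = max (e + h) (max (f + i) (g + j)) - k)
    (hq : q = max (h + o) (max (a + p) (b + g)) - n)
    (hr : r = max (b + e) (max (c + p) (d + q)) - o) :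
    r = j := by
  have E1 : i + l = max (a + j) (max (b + k) (c + h)) := by linarith
  have E2 : j + m = max (c + f) (max (d + k) (e + l)) := by linarith
  have E3 : k + n = max (f + a) (max (g + l) (h + m)) := by linarith
  have E4 : l + o = max (a + d) (max (b + m) (c + n)) := by linarith
  have E5 : k + p = max (e + h) (max (f + i) (g + j)) := by linarith
  have E6 : n + q = max (h + o) (max (a + p) (b + g)) := by linarith
  have E7 : o + r = max (b + e) (max (c + p) (d + q)) := by linarith
  have D : ∀ x y z w : ℝ, w = max x (max y z) → (w = x ∨ w = y ∨ w = z) ∧ x ≤ w ∧ y ≤ w ∧ z ≤ w := by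
    intro x y z w hw
    subst hw
    refine ⟨?_, le_max_left _ _, le_trans (le_max_left _ _) (le_max_right _ _),
      le_trans (le_max_right _ _) (le_max_right _ _)⟩
    rcases max_choice x (max y z) with h | h
    · exact Or.inl h
    · rcases max_choice y z with h2 | h2 <;> rw [h, h2] <;> simp
  obtain ⟨d1, i11, i12, i13⟩ := D _ _ _ _ E1
  obtain ⟨d2, i21, i22, i23⟩ := D _ _ _ _ E2
  obtain ⟨d3, i31, i32, i33⟩ := D _ _ _ _ E3
  obtain ⟨d4, i41, i42, i43⟩ := D _ _ _ _ E4
  obtain ⟨d5, i51, i52, i53⟩ := D _ _ _ _ E5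
  obtain ⟨d6, i61, i62, i63⟩ := D _ _ _ _ E6
  obtain ⟨d7, i71, i72, i73⟩ := D _ _ _ _ E7
  clear hl hm hn ho hp hq hr E1 E2 E3 E4 E5 E6 E7 D
  refine le_antisymm ?_ ?_
  · clear d2 d3 d4
    rcases d1 with h1 | h1 | h1 <;>
    rcases d5 with h5 | h5 | h5 <;>
    rcases d6 with h6 | h6 | h6 <;>
    rcases d7 with h7 | h7 | h7 <;>
    linarith
  · clear d7
    rcases d1 with h1 | h1 | h1 <;>
    rcases d2 with h2 | h2 | h2 <;>
    rcases d3 with h3 | h3 | h3 <;>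
    rcases d4 with h4 | h4 | h4 <;>
    rcases d5 with h5 | h5 | h5 <;>
    rcases d6 with h6 | h6 | h6 <;>
    linarith
end

section
/- Let a, b, c, d, e, f, g, h, i, j, k be real numbers. Define l = max(a + j, b + k, c + h) - i, m = max(c + f, d + k, e + l) - j, n = max(f + a, g + l, h + m) - k, o = max(a + d, b + m, c + n) - l, p = max(e + h, f + i, g + j) - k, q = max(h + o, a + p, b + g) - n, r = max(b + e, c + p, d + q) - o, and s = max(e + h, f + q, g + r) - p. Then s = k (and together with q = i and r = j this establishes the octagon relation for the tropical Desargues transformation over ℝ). -/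
private lemma max3_choice (x y z : ℝ) :
    max x (max y z) = x ∨ max x (max y z) = y ∨ max x (max y z) = z := by
  rcases max_choice x (max y z) with h | h
  · exact Or.inl h
  · rcases max_choice y z with h' | h'
    · exact Or.inr (Or.inl (by rw [h, h']))
    · exact Or.inr (Or.inr (by rw [h, h']))

set_option maxHeartbeats 4000000 in
/-- In the tropical octagon computation over ℝ, the eighth flip returns the label `k`,
establishing the octagon relation for the tropical Desargues transformation. -/
theorem tropical_octagon_s (a b c d e f g h i j k l m n o p q r s : ℝ)
    (hl : l = max (a + j) (max (b + k) (c + h)) - i)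
    (hm : m = max (c + f) (max (d + k) (e + l)) - j)
    (hn : n = max (f + a) (max (g + l) (h + m)) - k)
    (ho : o = max (a + d) (max (b + m) (c + n)) - l)
    (hp : p = max (e + h) (max (f + i) (g + j)) - k)
    (hq : q = max (h + o) (max (a + p) (b + g)) - n)
    (hr : r = max (b + e) (max (c + p) (d + q)) - o)
    (hs : s = max (e + h) (max (f + q) (g + r)) - p) :
    s = k := by
  have Hl : l + i = max (a + j) (max (b + k) (c + h)) := by rw [hl]; ring
  have Hm : m + j = max (c + f) (max (d + k) (e + l)) := by rw [hm]; ring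
  have Hn : n + k = max (f + a) (max (g + l) (h + m)) := by rw [hn]; ring
  have Ho : o + l = max (a + d) (max (b + m) (c + n)) := by rw [ho]; ring
  have Hp : p + k = max (e + h) (max (f + i) (g + j)) := by rw [hp]; ring
  have Hq : q + n = max (h + o) (max (a + p) (b + g)) := by rw [hq]; ring
  have Hr : r + o = max (b + e) (max (c + p) (d + q)) := by rw [hr]; ring
  have Hs : s + p = max (e + h) (max (f + q) (g + r)) := by rw [hs]; ring
  -- lower bounds
  obtain ⟨l1, l2, l3⟩ : a + j ≤ l + i ∧ b + k ≤ l + i ∧ c + h ≤ l + i := by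
    refine ⟨?_, ?_, ?_⟩ <;> rw [Hl]
    · exact le_max_left _ _
    · exact le_trans (le_max_left _ _) (le_max_right _ _)
    · exact le_trans (le_max_right _ _) (le_max_right _ _)
  obtain ⟨m1, m2, m3⟩ : c + f ≤ m + j ∧ d + k ≤ m + j ∧ e + l ≤ m + j := by
    refine ⟨?_, ?_, ?_⟩ <;> rw [Hm]
    · exact le_max_left _ _
    · exact le_trans (le_max_left _ _) (le_max_right _ _)
    · exact le_trans (le_max_right _ _) (le_max_right _ _)
  obtain ⟨n1, n2, n3⟩ : f + a ≤ n + k ∧ g + l ≤ n + k ∧ h + m ≤ n + k := by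
    refine ⟨?_, ?_, ?_⟩ <;> rw [Hn]
    · exact le_max_left _ _
    · exact le_trans (le_max_left _ _) (le_max_right _ _)
    · exact le_trans (le_max_right _ _) (le_max_right _ _)
  obtain ⟨o1, o2, o3⟩ : a + d ≤ o + l ∧ b + m ≤ o + l ∧ c + n ≤ o + l := by
    refine ⟨?_, ?_, ?_⟩ <;> rw [Ho]
    · exact le_max_left _ _
    · exact le_trans (le_max_left _ _) (le_max_right _ _)
    · exact le_trans (le_max_right _ _) (le_max_right _ _)
  obtain ⟨p1, p2, p3⟩ : e + h ≤ p + k ∧ f + i ≤ p + k ∧ g + j ≤ p + k := by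
    refine ⟨?_, ?_, ?_⟩ <;> rw [Hp]
    · exact le_max_left _ _
    · exact le_trans (le_max_left _ _) (le_max_right _ _)
    · exact le_trans (le_max_right _ _) (le_max_right _ _)
  have cl' : l + i = a + j ∨ l + i = b + k ∨ l + i = c + h := by
    rw [Hl]; exact max3_choice _ _ _
  have cm' : m + j = c + f ∨ m + j = d + k ∨ m + j = e + l := by
    rw [Hm]; exact max3_choice _ _ _
  have cn' : n + k = f + a ∨ n + k = g + l ∨ n + k = h + m := by
    rw [Hn]; exact max3_choice _ _ _
  have co' : o + l = a + d ∨ o + l = b + m ∨ o + l = c + n := by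
    rw [Ho]; exact max3_choice _ _ _
  have cp' : p + k = e + h ∨ p + k = f + i ∨ p + k = g + j := by
    rw [Hp]; exact max3_choice _ _ _
  -- first: q = i
  have hqi : q = i := by
    have ub : q + n ≤ n + i := by
      rw [Hq]
      have oub : o + l ≤ n + i + l - h := by
        rw [Ho]; refine max_le ?_ (max_le ?_ ?_) <;> linarith
      have pub : p + k ≤ n + i + k - a := by
        rw [Hp]; refine max_le ?_ (max_le ?_ ?_) <;> linarith
      refine max_le ?_ (max_le ?_ ?_) <;> linarith
    have M1 : h + o ≤ max (h + o) (max (a + p) (b + g)) := le_max_left _ _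
    have M2 : a + p ≤ max (h + o) (max (a + p) (b + g)) :=
      le_trans (le_max_left _ _) (le_max_right _ _)
    have M3 : b + g ≤ max (h + o) (max (a + p) (b + g)) :=
      le_trans (le_max_right _ _) (le_max_right _ _)
    have lb : n + i ≤ q + n := by
      rw [Hq]
      rcases cn' with h1 | h1 | h1 <;> rcases cl' with h2 | h2 | h2 <;>
        rcases cm' with h3 | h3 | h3 <;> linarith
    linarith
  rw [hqi] at Hr
  obtain ⟨r1, r2, r3⟩ : b + e ≤ r + o ∧ c + p ≤ r + o ∧ d + i ≤ r + o := by
    refine ⟨?_, ?_, ?_⟩ <;> rw [Hr]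
    · exact le_max_left _ _
    · exact le_trans (le_max_left _ _) (le_max_right _ _)
    · exact le_trans (le_max_right _ _) (le_max_right _ _)
  have hrj : r = j := by
    have ub : r + o ≤ o + j := by
      rw [Hr]
      rcases cl' with h2 | h2 | h2 <;> rcases cm' with h3 | h3 | h3 <;>
        rcases cn' with h4 | h4 | h4 <;> rcases co' with h5 | h5 | h5 <;>
        rcases cp' with h6 | h6 | h6 <;>
        (refine max_le ?_ (max_le ?_ ?_) <;> linarith)
    have lb : o + j ≤ r + o := by
      rcases cl' with h2 | h2 | h2 <;> rcases cm' with h3 | h3 | h3 <;>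
        rcases cn' with h4 | h4 | h4 <;> rcases co' with h5 | h5 | h5 <;>
        rcases cp' with h6 | h6 | h6 <;> linarith
    linarith
  rw [hqi, hrj] at Hs
  linarith [Hs, Hp]
end

section
/- Let n be a natural number and let W : Fin n → Submodule ℝ (Fin 3 → ℝ) be a family of pairwise distinct 2-dimensional subspaces of ℝ³ such that no three of the subspaces contain a common nonzero vector (equivalently, no three of the corresponding projective lines are concurrent). Then the complement in the real projective plane ℙ ℝ (Fin 3 → ℝ) (with its quotient topology) of the union of the n projective lines determined by the Wᵢ has exactly n·(n−1)/2 + 1 connected components; that is, n lines in general position split ℝP² into (n choose 2) + 1 regions. -/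
open scoped LinearAlgebra.Projectivization

/-- The quotient topology on the real projective plane, induced from `ℝ³ ∖ {0}`. -/
instance : TopologicalSpace (ℙ ℝ (Fin 3 → ℝ)) :=
  inferInstanceAs (TopologicalSpace (Quotient (projectivizationSetoid ℝ (Fin 3 → ℝ))))

noncomputable section AuxRegions

abbrev V3 : Type := Fin 3 → ℝ

/-- sign condition: `x` has the sign encoded by `b`. -/
def sc (b : Bool) (x : ℝ) : Prop := if b then 0 < x else x < 0

lemma sc_true {x : ℝ} : sc true x ↔ 0 < x := Iff.rfl
lemma sc_false {x : ℝ} : sc false x ↔ x < 0 := Iff.rfl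

lemma sc_ne {b : Bool} {x : ℝ} (h : sc b x) : x ≠ 0 := by
  cases b
  · exact (sc_false.mp h).ne
  · exact (sc_true.mp h).ne'

lemma sc_neg {b : Bool} {x : ℝ} (h : sc b x) : sc (!b) (-x) := by
  cases b
  · exact sc_true.mpr (by have := sc_false.mp h; linarith)
  · exact sc_false.mpr (by have := sc_true.mp h; linarith)

lemma sc_pos_mul {b : Bool} {x c : ℝ} (hc : 0 < c) (h : sc b x) : sc b (c * x) := by
  cases b
  · exact sc_false.mpr (mul_neg_of_pos_of_neg hc (sc_false.mp h))
  · exact sc_true.mpr (mul_pos hc (sc_true.mp h))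

lemma sc_neg_mul {b : Bool} {x c : ℝ} (hc : c < 0) (h : sc b x) : sc (!b) (c * x) := by
  cases b
  · exact sc_true.mpr (mul_pos_of_neg_of_neg hc (sc_false.mp h))
  · exact sc_false.mpr (mul_neg_of_neg_of_pos hc (sc_true.mp h))

lemma sc_unique {b b' : Bool} {x : ℝ} (h : sc b x) (h' : sc b' x) : b = b' := by
  cases b <;> cases b' <;> first
    | rfl
    | (exfalso; have := sc_true.mp ‹sc true x›; have := sc_false.mp ‹sc false x›; linarith)

lemma sc_decide {x : ℝ} (hx : x ≠ 0) : sc (decide (0 < x)) x := by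
  by_cases h : 0 < x
  · simpa [h] using sc_true.mpr h
  · have hlt : x < 0 := lt_of_le_of_ne (not_lt.mp h) hx
    simpa [h] using sc_false.mpr hlt

lemma sc_combo {b : Bool} {x y : ℝ} (a c : ℝ) (ha : 0 ≤ a) (hc : 0 ≤ c) (hac : a + c = 1)
    (hx : sc b x) (hy : sc b y) : sc b (a * x + c * y) := by
  rcases ha.eq_or_lt with h0 | hpos
  · have ha0 : a = 0 := h0.symm
    have hc1 : c = 1 := by linarith
    subst ha0; subst hc1
    simpa using hy
  · cases b
    · have h1 := sc_false.mp hx; have h2 := sc_false.mp hy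
      exact sc_false.mpr (by nlinarith)
    · have h1 := sc_true.mp hx; have h2 := sc_true.mp hy
      exact sc_true.mpr (by nlinarith)

variable {n : ℕ}

/-- The sign vector `σ` is realizable by a vector of `H`. -/
def SReal (H : Submodule ℝ V3) (f : Fin n → (V3 →ₗ[ℝ] ℝ)) (σ : Fin n → Bool) : Prop :=
  ∃ v ∈ H, ∀ i, sc (σ i) (f i v)

/-- Number of realizable sign vectors. -/
def Ncnt (H : Submodule ℝ V3) (f : Fin n → (V3 →ₗ[ℝ] ℝ)) : ℕ :=
  Nat.card {σ : Fin n → Bool // SReal H f σ}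

lemma sc_open (g : V3 →ₗ[ℝ] ℝ) (b : Bool) : IsOpen {x : V3 | sc b (g x)} := by
  have hc : Continuous g := g.continuous_of_finiteDimensional
  cases b
  · show IsOpen {x : V3 | g x < 0}
    exact isOpen_lt hc continuous_const
  · show IsOpen {x : V3 | 0 < g x}
    exact isOpen_lt continuous_const hc

lemma isOpen_signs (f : Fin n → (V3 →ₗ[ℝ] ℝ)) (σ : Fin n → Bool) :
    IsOpen {x : V3 | ∀ i, sc (σ i) (f i x)} := by
  have : {x : V3 | ∀ i, sc (σ i) (f i x)} = ⋂ i, {x | sc (σ i) (f i x)} := by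
    ext x; simp [Set.mem_iInter]
  rw [this]
  exact isOpen_iInter_of_finite fun i => sc_open (f i) (σ i)

lemma perturb (f : Fin n → (V3 →ₗ[ℝ] ℝ)) (σ : Fin n → Bool) (v u : V3)
    (hv : ∀ i, sc (σ i) (f i v)) :
    ∃ t : ℝ, 0 < t ∧ (∀ i, sc (σ i) (f i (v + t • u))) ∧ (∀ i, sc (σ i) (f i (v - t • u))) := by
  have hS := isOpen_signs f σ
  have hφ : Continuous (fun t : ℝ => v + t • u) := by continuity
  have h0 : (fun t : ℝ => v + t • u) ⁻¹' {x : V3 | ∀ i, sc (σ i) (f i x)} ∈ nhds (0 : ℝ) := by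
    refine (hS.preimage hφ).mem_nhds ?_
    show v + (0:ℝ) • u ∈ {x : V3 | ∀ i, sc (σ i) (f i x)}
    simpa using hv
  rcases Metric.mem_nhds_iff.mp h0 with ⟨δ, hδ, hball⟩
  have hmem : ∀ t : ℝ, |t| < δ → ∀ i, sc (σ i) (f i (v + t • u)) := by
    intro t ht i
    have : t ∈ Metric.ball (0 : ℝ) δ := by simpa [Real.dist_eq] using ht
    exact hball this i
  refine ⟨δ / 2, by linarith, ?_, ?_⟩
  · exact hmem (δ / 2) (by rw [abs_of_pos (by linarith)]; linarith)
  · have h := hmem (-(δ / 2)) (by rw [abs_neg, abs_of_pos (by linarith)]; linarith)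
    intro i
    have := h i
    simpa [sub_eq_add_neg, neg_smul] using this

def snocEquivBool (n : ℕ) : ((Fin n → Bool) × Bool) ≃ (Fin (n + 1) → Bool) where
  toFun x := Fin.snoc x.1 x.2
  invFun σ := (Fin.init σ, σ (Fin.last n))
  left_inv := by
    rintro ⟨τ, b⟩
    ext
    · simp [Fin.init_snoc]
    · simp [Fin.snoc_last]
  right_inv σ := Fin.snoc_init_self σ

@[simp] lemma snocEquivBool_apply (n : ℕ) (τ : Fin n → Bool) (b : Bool) :
    snocEquivBool n (τ, b) = Fin.snoc τ b := rfl

lemma master (H : Submodule ℝ V3) (f : Fin (n + 1) → (V3 →ₗ[ℝ] ℝ))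
    (hg : ∃ u ∈ H, f (Fin.last n) u ≠ 0) :
    Ncnt H f = Ncnt H (f ∘ Fin.castSucc)
      + Ncnt (H ⊓ LinearMap.ker (f (Fin.last n))) (f ∘ Fin.castSucc) := by
  classical
  obtain ⟨u, huH, hu⟩ := hg
  set g : V3 →ₗ[ℝ] ℝ := f (Fin.last n) with hgdef
  set fs : Fin n → (V3 →ₗ[ℝ] ℝ) := f ∘ Fin.castSucc with hfsdef
  set H' : Submodule ℝ V3 := H ⊓ LinearMap.ker g with hH'def
  have hfs_app : ∀ (i : Fin n) (v : V3), fs i v = f i.castSucc v := fun _ _ => rfl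
  -- building an extension from a point with known sign of `g`
  have mk_ext : ∀ (τ : Fin n → Bool) (b : Bool) (w : V3), w ∈ H →
      (∀ i, sc (τ i) (fs i w)) → sc b (g w) → SReal H f (Fin.snoc τ b) := by
    intro τ b w hwH hw hb
    refine ⟨w, hwH, fun i => ?_⟩
    refine Fin.lastCases ?_ (fun j => ?_) i
    · rw [Fin.snoc_last]; exact hb
    · rw [Fin.snoc_castSucc]; exact hw j
  have key1 : ∀ (τ : Fin n → Bool) (b : Bool),
      SReal H f (Fin.snoc τ b) → SReal H fs τ := by
    rintro τ b ⟨v, hvH, hv⟩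
    refine ⟨v, hvH, fun i => ?_⟩
    have := hv i.castSucc
    rwa [Fin.snoc_castSucc] at this
  have key2 : ∀ τ : Fin n → Bool, SReal H fs τ → ∃ b, SReal H f (Fin.snoc τ b) := by
    rintro τ ⟨v, hvH, hv⟩
    by_cases hgv : g v = 0
    · obtain ⟨t, ht, hp, _⟩ := perturb fs τ v u hv
      have hmemH : v + t • u ∈ H := add_mem hvH (Submodule.smul_mem _ _ huH)
      have hgval : g (v + t • u) = t * g u := by
        simp [map_add, map_smul, smul_eq_mul, hgv]
      rcases hu.lt_or_gt with hneg | hpos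
      · refine ⟨false, mk_ext τ false _ hmemH hp ?_⟩
        rw [hgval]; exact sc_false.mpr (mul_neg_of_pos_of_neg ht hneg)
      · refine ⟨true, mk_ext τ true _ hmemH hp ?_⟩
        rw [hgval]; exact sc_true.mpr (mul_pos ht hpos)
    · exact ⟨decide (0 < g v), mk_ext τ _ v hvH hv (sc_decide hgv)⟩
  have key3a : ∀ τ : Fin n → Bool, SReal H f (Fin.snoc τ true) →
      SReal H f (Fin.snoc τ false) → SReal H' fs τ := by
    rintro τ ⟨v₁, h1H, h1⟩ ⟨v₂, h2H, h2⟩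
    have hg1 : 0 < g v₁ := by
      have := h1 (Fin.last n); rw [Fin.snoc_last] at this; exact sc_true.mp this
    have hg2 : g v₂ < 0 := by
      have := h2 (Fin.last n); rw [Fin.snoc_last] at this; exact sc_false.mp this
    have hd : 0 < g v₁ - g v₂ := by linarith
    set t : ℝ := g v₁ / (g v₁ - g v₂) with htdef
    have ht0 : 0 < t := div_pos hg1 hd
    have ht1 : t < 1 := (div_lt_one hd).mpr (by linarith)
    set w : V3 := v₁ + t • (v₂ - v₁) with hwdef
    have hwH : w ∈ H := add_mem h1H (Submodule.smul_mem _ _ (sub_mem h2H h1H))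
    have hgw : g w = 0 := by
      have hc : t * (g v₁ - g v₂) = g v₁ := div_mul_cancel₀ _ hd.ne'
      have : g w = g v₁ + t * (g v₂ - g v₁) := by
        simp [hwdef, map_add, map_smul, map_sub, smul_eq_mul]; try ring
      rw [this]; linear_combination -hc
    refine ⟨w, Submodule.mem_inf.mpr ⟨hwH, LinearMap.mem_ker.mpr hgw⟩, fun i => ?_⟩
    have hfi : fs i w = (1 - t) * fs i v₁ + t * fs i v₂ := by
      simp [hwdef, hfs_app, map_add, map_smul, map_sub, smul_eq_mul]; try ring
    have hs1 : sc (τ i) (fs i v₁) := by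
      have := h1 i.castSucc; rwa [Fin.snoc_castSucc] at this
    have hs2 : sc (τ i) (fs i v₂) := by
      have := h2 i.castSucc; rwa [Fin.snoc_castSucc] at this
    rw [hfi]
    exact sc_combo (1 - t) t (by linarith) ht0.le (by ring) hs1 hs2
  have key3b : ∀ τ : Fin n → Bool, SReal H' fs τ → ∀ b, SReal H f (Fin.snoc τ b) := by
    rintro τ ⟨v, hvH', hv⟩ b
    obtain ⟨hvH, hker⟩ := Submodule.mem_inf.mp hvH'
    have hgv : g v = 0 := LinearMap.mem_ker.mp hker
    obtain ⟨t, ht, hp, hm⟩ := perturb fs τ v u hv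
    have hmemp : v + t • u ∈ H := add_mem hvH (Submodule.smul_mem _ _ huH)
    have hmemm : v - t • u ∈ H := sub_mem hvH (Submodule.smul_mem _ _ huH)
    have hgp : g (v + t • u) = t * g u := by
      simp [map_add, map_smul, smul_eq_mul, hgv]
    have hgm : g (v - t • u) = -(t * g u) := by
      simp [map_sub, map_smul, smul_eq_mul, hgv]
    rcases hu.lt_or_gt with hneg | hpos
    · cases b
      · refine mk_ext τ false _ hmemp hp ?_
        rw [hgp]; exact sc_false.mpr (mul_neg_of_pos_of_neg ht hneg)
      · refine mk_ext τ true _ hmemm hm ?_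
        rw [hgm]; exact sc_true.mpr (by nlinarith)
    · cases b
      · refine mk_ext τ false _ hmemm hm ?_
        rw [hgm]; exact sc_false.mpr (by nlinarith)
      · refine mk_ext τ true _ hmemp hp ?_
        rw [hgp]; exact sc_true.mpr (mul_pos ht hpos)
  -- counting
  have hcard : ∀ (m : ℕ) (F : Fin m → (V3 →ₗ[ℝ] ℝ)) (HH : Submodule ℝ V3),
      Ncnt HH F = ∑ σ : Fin m → Bool, if SReal HH F σ then 1 else 0 := by
    intro m F HH
    rw [Ncnt, Nat.card_eq_fintype_card, Fintype.card_subtype, Finset.card_filter]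
  set e := snocEquivBool n with hedef
  have per : ∀ τ : Fin n → Bool,
      ((if SReal H f (Fin.snoc τ true) then 1 else 0)
        + (if SReal H f (Fin.snoc τ false) then 1 else 0) : ℕ)
      = (if SReal H fs τ then 1 else 0) + (if SReal H' fs τ then 1 else 0) := by
    intro τ
    by_cases hQ' : SReal H' fs τ
    · have h1 := key3b τ hQ' true
      have h2 := key3b τ hQ' false
      have hQ : SReal H fs τ := key1 τ true h1
      simp [hQ, hQ', h1, h2]
    · by_cases hQ : SReal H fs τ
      · obtain ⟨b, hb⟩ := key2 τ hQ
        have hnot : ¬(SReal H f (Fin.snoc τ true) ∧ SReal H f (Fin.snoc τ false)) :=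
          fun ⟨x, y⟩ => hQ' (key3a τ x y)
        cases b
        · have hT : ¬SReal H f (Fin.snoc τ true) := fun h => hnot ⟨h, hb⟩
          simp [hQ, hQ', hb, hT]
        · have hF : ¬SReal H f (Fin.snoc τ false) := fun h => hnot ⟨hb, h⟩
          simp [hQ, hQ', hb, hF]
      · have h1 : ¬SReal H f (Fin.snoc τ true) := fun h => hQ (key1 τ _ h)
        have h2 : ¬SReal H f (Fin.snoc τ false) := fun h => hQ (key1 τ _ h)
        simp [hQ, hQ', h1, h2]
  rw [hcard, hcard, hcard]
  rw [← Equiv.sum_comp e (fun σ => if SReal H f σ then (1 : ℕ) else 0)]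
  rw [Fintype.sum_prod_type]
  have : ∀ τ : Fin n → Bool,
      (∑ b : Bool, if SReal H f (e (τ, b)) then (1 : ℕ) else 0)
      = (if SReal H fs τ then 1 else 0) + (if SReal H' fs τ then 1 else 0) := by
    intro τ
    rw [Fintype.sum_bool]
    simpa [hedef] using per τ
  rw [Finset.sum_congr rfl (fun τ _ => this τ)]
  rw [Finset.sum_add_distrib]

lemma Ncnt_nil (H : Submodule ℝ V3) (f : Fin 0 → (V3 →ₗ[ℝ] ℝ)) : Ncnt H f = 1 := by
  have hall : ∀ σ : Fin 0 → Bool, SReal H f σ :=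
    fun σ => ⟨0, H.zero_mem, fun i => i.elim0⟩
  haveI : Unique {σ : Fin 0 → Bool // SReal H f σ} :=
    { default := ⟨fun i => i.elim0, hall _⟩
      uniq := by rintro ⟨σ, _⟩; ext i; exact i.elim0 }
  exact Nat.card_unique

lemma Ncnt_bot (hn : 0 < n) (f : Fin n → (V3 →ₗ[ℝ] ℝ)) : Ncnt ⊥ f = 0 := by
  haveI : IsEmpty {σ : Fin n → Bool // SReal ⊥ f σ} := by
    constructor
    rintro ⟨σ, v, hv, hs⟩
    have hv0 : v = 0 := Submodule.mem_bot ℝ |>.mp hv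
    have := hs ⟨0, hn⟩
    rw [hv0, map_zero] at this
    exact sc_ne this rfl
  exact Nat.card_of_isEmpty

lemma Ncnt_line (H : Submodule ℝ V3) (f : Fin n → (V3 →ₗ[ℝ] ℝ))
    (hw : ∃ w ∈ H, w ≠ 0) (hker : ∀ (i : Fin n) (v : V3), v ∈ H → f i v = 0 → v = 0)
    (hn : 0 < n) : Ncnt H f = 2 := by
  induction n with
  | zero => omega
  | succ m ih =>
    obtain ⟨w, hwH, hw0⟩ := hw
    have hg : ∃ u ∈ H, f (Fin.last m) u ≠ 0 :=
      ⟨w, hwH, fun h => hw0 (hker _ w hwH h)⟩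
    rw [master H f hg]
    have hbot : H ⊓ LinearMap.ker (f (Fin.last m)) = ⊥ := by
      rw [eq_bot_iff]
      rintro v hv
      obtain ⟨h1, h2⟩ := Submodule.mem_inf.mp hv
      exact Submodule.mem_bot ℝ |>.mpr (hker _ v h1 (LinearMap.mem_ker.mp h2))
    rw [hbot]
    rcases Nat.eq_zero_or_pos m with hm | hm
    · subst hm
      rw [Ncnt_nil, Ncnt_nil]
    · rw [ih (f ∘ Fin.castSucc) (fun i v hv h => hker i.castSucc v hv h) hm, Ncnt_bot hm]

lemma Ncnt_plane (H : Submodule ℝ V3) (f : Fin n → (V3 →ₗ[ℝ] ℝ))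
    (hne : ∀ i, ∃ u ∈ H, f i u ≠ 0)
    (hpair : ∀ i j : Fin n, i ≠ j → ∀ v ∈ H, f i v = 0 → f j v = 0 → v = 0)
    (hint : ∀ i, ∃ w : V3, w ≠ 0 ∧ w ∈ H ∧ f i w = 0)
    (hn : 0 < n) : Ncnt H f = 2 * n := by
  induction n with
  | zero => omega
  | succ m ih =>
    obtain ⟨u, huH, hu⟩ := hne (Fin.last m)
    rw [master H f ⟨u, huH, hu⟩]
    set H' := H ⊓ LinearMap.ker (f (Fin.last m)) with hH'
    rcases Nat.eq_zero_or_pos m with hm | hm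
    · subst hm
      rw [Ncnt_nil, Ncnt_nil]
    · have hline : Ncnt H' (f ∘ Fin.castSucc) = 2 := by
        obtain ⟨w, hw0, hwH, hwker⟩ := hint (Fin.last m)
        refine Ncnt_line H' _ ⟨w, Submodule.mem_inf.mpr ⟨hwH, LinearMap.mem_ker.mpr hwker⟩, hw0⟩
          ?_ hm
        intro i v hv hfv
        obtain ⟨h1, h2⟩ := Submodule.mem_inf.mp hv
        exact hpair i.castSucc (Fin.last m) (Fin.castSucc_lt_last i).ne v h1 hfv
          (LinearMap.mem_ker.mp h2)
      have hplane : Ncnt H (f ∘ Fin.castSucc) = 2 * m := by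
        refine ih _ (fun i => hne i.castSucc)
          (fun i j hij v hv h1 h2 =>
            hpair i.castSucc j.castSucc (fun h => hij (Fin.castSucc_injective m h)) v hv h1 h2)
          (fun i => hint i.castSucc) hm
      rw [hline, hplane]
      ring

lemma Ncnt_top (f : Fin n → (V3 →ₗ[ℝ] ℝ))
    (hA : ∀ i, ∃ u : V3, f i u ≠ 0)
    (hB : ∀ i j : Fin n, i ≠ j → ∃ w : V3, w ≠ 0 ∧ f i w = 0 ∧ f j w = 0)
    (hC : ∀ i j : Fin n, i ≠ j → ∃ u : V3, f i u = 0 ∧ f j u ≠ 0)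
    (hD : ∀ i j k : Fin n, i ≠ j → j ≠ k → i ≠ k →
      ∀ v : V3, f i v = 0 → f j v = 0 → f k v = 0 → v = 0)
    (hn : 0 < n) : Ncnt ⊤ f = n * n - n + 2 := by
  induction n with
  | zero => omega
  | succ m ih =>
    obtain ⟨u, hu⟩ := hA (Fin.last m)
    rw [master ⊤ f ⟨u, trivial, hu⟩, top_inf_eq]
    rcases Nat.eq_zero_or_pos m with hm | hm
    · subst hm
      rw [Ncnt_nil, Ncnt_nil]
    · have htop : Ncnt ⊤ (f ∘ Fin.castSucc) = m * m - m + 2 := by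
        refine ih _ (fun i => hA i.castSucc)
          (fun i j hij => hB i.castSucc j.castSucc
            (fun h => hij (Fin.castSucc_injective m h)))
          (fun i j hij => hC i.castSucc j.castSucc
            (fun h => hij (Fin.castSucc_injective m h)))
          (fun i j k h1 h2 h3 => hD i.castSucc j.castSucc k.castSucc
            (fun h => h1 (Fin.castSucc_injective m h))
            (fun h => h2 (Fin.castSucc_injective m h))
            (fun h => h3 (Fin.castSucc_injective m h))) hm
      have hker : Ncnt (LinearMap.ker (f (Fin.last m))) (f ∘ Fin.castSucc) = 2 * m := by
        refine Ncnt_plane _ _ ?_ ?_ ?_ hm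
        · intro i
          obtain ⟨w, h1, h2⟩ := hC (Fin.last m) i.castSucc (Fin.castSucc_lt_last i).ne'
          exact ⟨w, LinearMap.mem_ker.mpr h1, h2⟩
        · intro i j hij v hv h1 h2
          exact hD i.castSucc j.castSucc (Fin.last m)
            (fun h => hij (Fin.castSucc_injective m h))
            (Fin.castSucc_lt_last j).ne (Fin.castSucc_lt_last i).ne
            v h1 h2 (LinearMap.mem_ker.mp hv)
        · intro i
          obtain ⟨w, h0, h1, h2⟩ := hB i.castSucc (Fin.last m) (Fin.castSucc_lt_last i).ne
          exact ⟨w, h0, LinearMap.mem_ker.mpr h2, h1⟩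
      rw [htop, hker]
      have hle : m ≤ m * m := Nat.le_mul_of_pos_left m hm
      have hsq : (m + 1) * (m + 1) = m * m + 2 * m + 1 := by ring
      omega

lemma sc_of_pos_mul {b : Bool} {x a : ℝ} (ha : 0 < a) (h : sc b (a * x)) : sc b x := by
  have := sc_pos_mul (inv_pos.mpr ha) h
  rwa [← mul_assoc, inv_mul_cancel₀ ha.ne', one_mul] at this

lemma sc_of_neg_mul {b : Bool} {x a : ℝ} (ha : a < 0) (h : sc b (a * x)) : sc (!b) x := by
  have := sc_neg_mul (inv_lt_zero.mpr ha) h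
  rwa [← mul_assoc, inv_mul_cancel₀ ha.ne, one_mul] at this

/-- The open cone of vectors with sign vector `σ`. -/
def Cset (f : Fin n → (V3 →ₗ[ℝ] ℝ)) (σ : Fin n → Bool) : Set V3 :=
  {v | ∀ i, sc (σ i) (f i v)}

lemma Cset_nonzero (hn : 0 < n) {f : Fin n → (V3 →ₗ[ℝ] ℝ)} {σ : Fin n → Bool} {v : V3}
    (hv : v ∈ Cset f σ) : v ≠ 0 := by
  intro h
  have := hv ⟨0, hn⟩
  rw [h, map_zero] at this
  exact sc_ne this rfl

lemma Cset_neg {f : Fin n → (V3 →ₗ[ℝ] ℝ)} {σ : Fin n → Bool} {v : V3}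
    (hv : v ∈ Cset f σ) : -v ∈ Cset f (fun i => !(σ i)) := by
  intro i
  have := sc_neg (hv i)
  rwa [← map_neg] at this

lemma Cset_open (f : Fin n → (V3 →ₗ[ℝ] ℝ)) (σ : Fin n → Bool) : IsOpen (Cset f σ) :=
  isOpen_signs f σ

lemma Cset_convex (f : Fin n → (V3 →ₗ[ℝ] ℝ)) (σ : Fin n → Bool) : Convex ℝ (Cset f σ) := by
  have : Cset f σ = ⋂ i, {v : V3 | sc (σ i) (f i v)} := by
    ext v; simp [Cset, Set.mem_iInter]
  rw [this]
  refine convex_iInter fun i => ?_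
  cases hσ : σ i
  · show Convex ℝ {v : V3 | f i v < 0}
    exact convex_halfSpace_lt (f i).isLinear 0
  · show Convex ℝ {v : V3 | 0 < f i v}
    exact convex_halfSpace_gt (f i).isLinear 0

lemma Cset_unique {f : Fin n → (V3 →ₗ[ℝ] ℝ)} {σ σ' : Fin n → Bool} {v : V3}
    (h : v ∈ Cset f σ) (h' : v ∈ Cset f σ') : σ = σ' :=
  funext fun i => sc_unique (h i) (h' i)

/-- The image of `Cset f σ` in the projective plane. -/
def Dset (f : Fin n → (V3 →ₗ[ℝ] ℝ)) (σ : Fin n → Bool) : Set (ℙ ℝ V3) :=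
  {p | ∃ v, ∃ hv : v ≠ 0, v ∈ Cset f σ ∧ Projectivization.mk ℝ v hv = p}

lemma mk_mem_Dset {f : Fin n → (V3 →ₗ[ℝ] ℝ)} {σ : Fin n → Bool} {v : V3} (hv : v ≠ 0) :
    Projectivization.mk ℝ v hv ∈ Dset f σ ↔
      (v ∈ Cset f σ ∨ v ∈ Cset f (fun i => !(σ i))) := by
  constructor
  · rintro ⟨w, hw, hwC, hmk⟩
    rw [Projectivization.mk_eq_mk_iff] at hmk
    obtain ⟨a, ha⟩ := hmk
    have hval : ∀ i, f i w = (a : ℝ) * f i v := by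
      intro i
      rw [← ha, Units.smul_def, map_smul, smul_eq_mul]
    rcases lt_trichotomy (a : ℝ) 0 with hneg | hzero | hpos
    · right
      intro i
      have := hwC i
      rw [hval i] at this
      have h2 := sc_of_neg_mul hneg this
      simpa using h2
    · exact absurd hzero a.ne_zero
    · left
      intro i
      have := hwC i
      rw [hval i] at this
      exact sc_of_pos_mul hpos this
  · rintro (h | h)
    · exact ⟨v, hv, h, rfl⟩
    · refine ⟨-v, neg_ne_zero.mpr hv, ?_, ?_⟩
      · have := Cset_neg h
        intro i
        simpa using this i
      · rw [Projectivization.mk_eq_mk_iff]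
        exact ⟨-1, by simp⟩

lemma Dset_not (f : Fin n → (V3 →ₗ[ℝ] ℝ)) (σ : Fin n → Bool) :
    Dset f (fun i => !(σ i)) = Dset f σ := by
  ext p
  constructor
  · rintro ⟨v, hv, hC, rfl⟩
    rw [mk_mem_Dset hv]
    exact Or.inr hC
  · rintro ⟨v, hv, hC, rfl⟩
    rw [mk_mem_Dset hv]
    right
    intro i
    simpa using hC i

lemma Dset_cases {f : Fin n → (V3 →ₗ[ℝ] ℝ)} {σ σ' : Fin n → Bool} {p : ℙ ℝ V3}
    (hp : p ∈ Dset f σ) (hp' : p ∈ Dset f σ') :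
    σ' = σ ∨ σ' = fun i => !(σ i) := by
  obtain ⟨v, hv, hC, rfl⟩ := hp
  rw [mk_mem_Dset hv] at hp'
  rcases hp' with h | h
  · exact Or.inl (Cset_unique h hC)
  · right
    have he : (fun i => !(σ' i)) = σ := Cset_unique h hC
    funext i
    have := congrFun he i
    rw [← this, Bool.not_not]

lemma Dset_open (f : Fin n → (V3 →ₗ[ℝ] ℝ)) (σ : Fin n → Bool) : IsOpen (Dset f σ) := by
  have hq : Topology.IsQuotientMap
      (fun x : {v : V3 // v ≠ 0} => Projectivization.mk ℝ x.1 x.2) :=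
    isQuotientMap_quotient_mk' (s := projectivizationSetoid ℝ V3)
  refine hq.isOpen_preimage.mp ?_
  have hpre : (fun x : {v : V3 // v ≠ 0} => Projectivization.mk ℝ x.1 x.2) ⁻¹' (Dset f σ)
      = Subtype.val ⁻¹' (Cset f σ ∪ Cset f (fun i => !(σ i))) := by
    ext x
    show Projectivization.mk ℝ x.1 x.2 ∈ Dset f σ ↔ _
    rw [mk_mem_Dset x.2]
    rfl
  rw [hpre]
  exact ((Cset_open f σ).union (Cset_open f _)).preimage continuous_subtype_val

lemma Dset_preconnected (hn : 0 < n) (f : Fin n → (V3 →ₗ[ℝ] ℝ)) (σ : Fin n → Bool) :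
    IsPreconnected (Dset f σ) := by
  have hCpre : IsPreconnected (Cset f σ) := (Cset_convex f σ).isPreconnected
  have hind : Topology.IsInducing (Subtype.val : {v : V3 // v ≠ 0} → V3) :=
    Topology.IsInducing.subtypeVal
  have hsub : IsPreconnected (Subtype.val ⁻¹' (Cset f σ) : Set {v : V3 // v ≠ 0}) := by
    rw [← hind.isPreconnected_image]
    have himg : (Subtype.val : {v : V3 // v ≠ 0} → V3) '' (Subtype.val ⁻¹' (Cset f σ))
        = Cset f σ := by
      ext v
      constructor
      · rintro ⟨⟨w, hw⟩, hwC, rfl⟩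
        exact hwC
      · intro hvC
        exact ⟨⟨v, Cset_nonzero hn hvC⟩, hvC, rfl⟩
    rw [himg]
    exact hCpre
  have hcont : Continuous (fun x : {v : V3 // v ≠ 0} => Projectivization.mk ℝ x.1 x.2) :=
    continuous_quotient_mk' (s := projectivizationSetoid ℝ V3)
  have himg2 : Dset f σ
      = (fun x : {v : V3 // v ≠ 0} => Projectivization.mk ℝ x.1 x.2)
          '' (Subtype.val ⁻¹' (Cset f σ)) := by
    ext p
    constructor
    · rintro ⟨v, hv, hC, rfl⟩
      exact ⟨⟨v, hv⟩, hC, rfl⟩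
    · rintro ⟨⟨v, hv⟩, hC, rfl⟩
      exact ⟨v, hv, hC, rfl⟩
  rw [himg2]
  exact hsub.image _ hcont.continuousOn

end AuxRegions

/-- `n` lines in general position split the real projective plane into exactly
`n*(n-1)/2 + 1` regions. -/
theorem general_position_lines_regions (n : ℕ)
    (W : Fin n → Submodule ℝ (Fin 3 → ℝ))
    (hdim : ∀ i, Module.finrank ℝ (W i) = 2)
    (hinj : Function.Injective W)
    (hgen : ∀ i j k : Fin n, i ≠ j → j ≠ k → i ≠ k →
      ¬ ∃ v : Fin 3 → ℝ, v ≠ 0 ∧ v ∈ W i ∧ v ∈ W j ∧ v ∈ W k) :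
    letI U : Set (ℙ ℝ (Fin 3 → ℝ)) := {p | ∃ i : Fin n, p.submodule ≤ W i}ᶜ
    Nat.card (ConnectedComponents U) = n * (n - 1) / 2 + 1 := by
  classical
  show Nat.card (ConnectedComponents
      ↥({p : ℙ ℝ (Fin 3 → ℝ) | ∃ i : Fin n, p.submodule ≤ W i}ᶜ)) = n * (n - 1) / 2 + 1
  have h3 : Module.finrank ℝ (Fin 3 → ℝ) = 3 := Module.finrank_fin_fun ℝ
  -- construct linear functionals with the `W i` as kernels
  have hf : ∀ i : Fin n, ∃ φ : V3 →ₗ[ℝ] ℝ, LinearMap.ker φ = W i := by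
    intro i
    have hq : Module.finrank ℝ ((Fin 3 → ℝ) ⧸ W i) = 1 := by
      have h := Submodule.finrank_quotient_add_finrank (W i)
      rw [hdim i, h3] at h
      omega
    have e : ((Fin 3 → ℝ) ⧸ W i) ≃ₗ[ℝ] ℝ :=
      LinearEquiv.ofFinrankEq _ _ (by rw [hq, Module.finrank_self])
    refine ⟨e.toLinearMap ∘ₗ (W i).mkQ, ?_⟩
    rw [LinearMap.ker_comp, LinearEquiv.ker, Submodule.comap_bot, Submodule.ker_mkQ]
  choose f hker using hf
  have hmemW : ∀ (i : Fin n) (v : V3), v ∈ W i ↔ f i v = 0 := by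
    intro i v
    rw [← hker i]
    exact Iff.rfl
  rcases Nat.eq_zero_or_pos n with hn0 | hn
  · -- no lines: the whole projective plane, which is connected
    subst hn0
    have hU : ({p : ℙ ℝ V3 | ∃ i : Fin 0, p.submodule ≤ W i}ᶜ) = Set.univ := by
      ext p
      simp
    rw [hU]
    haveI : ConnectedSpace {v : V3 // v ≠ 0} := by
      have h1 : IsConnected ({0}ᶜ : Set V3) :=
        isConnected_compl_singleton_of_one_lt_rank
          (by rw [← Module.finrank_eq_rank, h3]; norm_num) 0
      exact Subtype.connectedSpace h1
    have hcont : Continuous (fun x : {v : V3 // v ≠ 0} => Projectivization.mk ℝ x.1 x.2) :=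
      continuous_quotient_mk' (s := projectivizationSetoid ℝ V3)
    have hsurj : Function.Surjective
        (fun x : {v : V3 // v ≠ 0} => Projectivization.mk ℝ x.1 x.2) := by
      intro p
      exact ⟨⟨p.rep, Projectivization.rep_nonzero p⟩, Projectivization.mk_rep p⟩
    haveI hpc : PreconnectedSpace (ℙ ℝ V3) :=
      ⟨by rw [← hsurj.range_eq]; exact isPreconnected_range hcont⟩
    haveI : ConnectedSpace (ℙ ℝ V3) :=
      { toPreconnectedSpace := hpc
        toNonempty := ⟨Projectivization.mk ℝ (fun _ => 1)
          (fun h => one_ne_zero (congrFun h 0))⟩ }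
    haveI : ConnectedSpace ↥(Set.univ : Set (ℙ ℝ V3)) :=
      Subtype.connectedSpace isConnected_univ
    haveI : Subsingleton (ConnectedComponents ↥(Set.univ : Set (ℙ ℝ V3))) := by
      constructor
      intro a b
      obtain ⟨x, rfl⟩ := ConnectedComponents.surjective_coe a
      obtain ⟨y, rfl⟩ := ConnectedComponents.surjective_coe b
      rw [ConnectedComponents.coe_eq_coe, PreconnectedSpace.connectedComponent_eq_univ,
        PreconnectedSpace.connectedComponent_eq_univ]
    haveI : Nonempty (ConnectedComponents ↥(Set.univ : Set (ℙ ℝ V3))) :=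
      ⟨ConnectedComponents.mk (Classical.arbitrary _)⟩
    rw [Nat.card_unique]
  · -- the main case `0 < n`
    set Uset : Set (ℙ ℝ V3) := {p : ℙ ℝ V3 | ∃ i : Fin n, p.submodule ≤ W i}ᶜ with hUset
    have hmemU : ∀ (v : V3) (hv : v ≠ 0),
        (Projectivization.mk ℝ v hv ∈ Uset ↔ ∀ i, f i v ≠ 0) := by
      intro v hv
      rw [hUset]
      simp only [Set.mem_compl_iff, Set.mem_setOf_eq, not_exists]
      refine forall_congr' fun i => not_congr ?_
      rw [Projectivization.submodule_mk, Submodule.span_singleton_le_iff_mem, hmemW]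
    have hDsub : ∀ σ : Fin n → Bool, Dset f σ ⊆ Uset := by
      rintro σ p ⟨v, hv, hC, rfl⟩
      rw [hmemU v hv]
      exact fun i => sc_ne (hC i)
    have hcover : ∀ p ∈ Uset, ∃ σ : Fin n → Bool, SReal ⊤ f σ ∧ p ∈ Dset f σ := by
      intro p hp
      have hrep := Projectivization.mk_rep p
      have hv : p.rep ≠ 0 := Projectivization.rep_nonzero p
      have hne : ∀ i, f i p.rep ≠ 0 := by
        have h := hmemU p.rep hv
        rw [hrep] at h
        exact h.mp hp
      exact ⟨fun i => decide (0 < f i p.rep),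
        ⟨p.rep, trivial, fun i => sc_decide (hne i)⟩,
        p.rep, hv, fun i => sc_decide (hne i), Projectivization.mk_rep p⟩
    set E : (Fin n → Bool) → Set ↥Uset := fun σ => Subtype.val ⁻¹' (Dset f σ) with hE
    have hEopen : ∀ σ, IsOpen (E σ) :=
      fun σ => (Dset_open f σ).preimage continuous_subtype_val
    have hindU : Topology.IsInducing (Subtype.val : ↥Uset → ℙ ℝ V3) :=
      Topology.IsInducing.subtypeVal
    have hEpre : ∀ σ, IsPreconnected (E σ) := by
      intro σ
      rw [hE]
      rw [← hindU.isPreconnected_image]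
      have himg : (Subtype.val : ↥Uset → ℙ ℝ V3) '' (Subtype.val ⁻¹' (Dset f σ))
          = Dset f σ := by
        ext p
        constructor
        · rintro ⟨⟨q, hq⟩, hq2, rfl⟩
          exact hq2
        · intro hp
          exact ⟨⟨p, hDsub σ hp⟩, hp, rfl⟩
      rw [himg]
      exact Dset_preconnected hn f σ
    have hEnot : ∀ σ, E (fun i => !(σ i)) = E σ := by
      intro σ
      show Subtype.val ⁻¹' Dset f (fun i => !(σ i)) = Subtype.val ⁻¹' Dset f σ
      rw [Dset_not]
    have hEcover : ∀ x : ↥Uset, ∃ σ, SReal ⊤ f σ ∧ x ∈ E σ := by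
      intro x
      obtain ⟨σ, h1, h2⟩ := hcover x.1 x.2
      exact ⟨σ, h1, h2⟩
    have hclosed : ∀ σ, IsClosed (E σ) := by
      intro σ
      rw [← isOpen_compl_iff]
      have hcompl : (E σ)ᶜ
          = ⋃ σ' ∈ {σ' : Fin n → Bool | σ' ≠ σ ∧ σ' ≠ fun i => !(σ i)}, E σ' := by
        ext x
        simp only [Set.mem_compl_iff, Set.mem_iUnion, Set.mem_setOf_eq]
        constructor
        · intro hx
          obtain ⟨σx, _, hxσ⟩ := hEcover x
          refine ⟨σx, ⟨?_, ?_⟩, hxσ⟩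
          · rintro rfl
            exact hx hxσ
          · rintro rfl
            rw [hEnot] at hxσ
            exact hx hxσ
        · rintro ⟨σ', ⟨h1, h2⟩, hx'⟩ hx
          have hcase := Dset_cases (show x.1 ∈ Dset f σ from hx)
            (show x.1 ∈ Dset f σ' from hx')
          rcases hcase with h | h
          · exact h1 h
          · exact h2 h
      rw [hcompl]
      exact isOpen_biUnion fun σ' _ => hEopen σ'
    have hcomp : ∀ (σ) (x : ↥Uset), x ∈ E σ → connectedComponent x = E σ := by
      intro σ x hx
      refine Set.Subset.antisymm ?_ ?_
      · exact IsClopen.connectedComponent_subset ⟨hclosed σ, hEopen σ⟩ hx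
      · exact (hEpre σ).subset_connectedComponent hx
    have hpt : ∀ σ : Fin n → Bool, SReal ⊤ f σ → ∃ x : ↥Uset, x ∈ E σ := by
      rintro σ ⟨v, -, hv⟩
      have hvC : v ∈ Cset f σ := hv
      have hv0 : v ≠ 0 := Cset_nonzero hn hvC
      have hmm : Projectivization.mk ℝ v hv0 ∈ Dset f σ := ⟨v, hv0, hvC, rfl⟩
      exact ⟨⟨_, hDsub σ hmm⟩, hmm⟩
    have hSneg : ∀ σ : Fin n → Bool, SReal ⊤ f σ → SReal ⊤ f (fun i => !(σ i)) := by
      rintro σ ⟨v, -, hv⟩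
      exact ⟨-v, trivial, Cset_neg hv⟩
    set i0 : Fin n := ⟨0, hn⟩ with hi0
    have hmain : Nat.card {σ : Fin n → Bool // SReal ⊤ f σ}
        = Nat.card (ConnectedComponents ↥Uset × Bool) := by
      have hchoice : ∀ s : {σ : Fin n → Bool // SReal ⊤ f σ}, ∃ x : ↥Uset, x ∈ E s.1 :=
        fun s => hpt s.1 s.2
      choose pt hptE using hchoice
      refine Nat.card_eq_of_bijective
        (fun s => (ConnectedComponents.mk (pt s), s.1 i0)) ⟨?_, ?_⟩
      · rintro ⟨σ, hσ⟩ ⟨σ', hσ'⟩ heq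
        obtain ⟨h1, h2⟩ := Prod.ext_iff.mp heq
        simp only at h1 h2
        rw [ConnectedComponents.coe_eq_coe] at h1
        rw [hcomp σ _ (hptE ⟨σ, hσ⟩), hcomp σ' _ (hptE ⟨σ', hσ'⟩)] at h1
        have hx : pt ⟨σ, hσ⟩ ∈ E σ' := by
          rw [← h1]
          exact hptE ⟨σ, hσ⟩
        have hcase := Dset_cases (show (pt ⟨σ, hσ⟩).1 ∈ Dset f σ from hptE ⟨σ, hσ⟩)
          (show (pt ⟨σ, hσ⟩).1 ∈ Dset f σ' from hx)
        rcases hcase with h | h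
        · exact Subtype.ext h.symm
        · exfalso
          rw [h] at h2
          simp at h2
      · rintro ⟨c, b⟩
        obtain ⟨x, rfl⟩ := ConnectedComponents.surjective_coe c
        obtain ⟨σx, hσx, hxE⟩ := hEcover x
        by_cases hb : σx i0 = b
        · refine ⟨⟨σx, hσx⟩, Prod.ext ?_ hb⟩
          show ConnectedComponents.mk (pt ⟨σx, hσx⟩) = ConnectedComponents.mk x
          rw [ConnectedComponents.coe_eq_coe, hcomp σx _ (hptE ⟨σx, hσx⟩), hcomp σx x hxE]
        · have hb' : (!(σx i0)) = b := by
            have h0 : σx i0 = !b := Bool.eq_not_iff.mpr hb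
            rw [h0, Bool.not_not]
          refine ⟨⟨fun i => !(σx i), hSneg σx hσx⟩, Prod.ext ?_ hb'⟩
          show ConnectedComponents.mk (pt ⟨fun i => !(σx i), hSneg σx hσx⟩)
            = ConnectedComponents.mk x
          rw [ConnectedComponents.coe_eq_coe,
            hcomp _ _ (hptE ⟨fun i => !(σx i), hSneg σx hσx⟩), hcomp σx x hxE, hEnot]
    -- count the sign vectors
    have hA : ∀ i, ∃ u : V3, f i u ≠ 0 := by
      intro i
      by_contra h
      push_neg at h
      have hk : LinearMap.ker (f i) = ⊤ := by
        ext v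
        simp [LinearMap.mem_ker, h v]
      rw [hker i] at hk
      have := hdim i
      rw [hk, finrank_top, h3] at this
      omega
    have hB : ∀ i j : Fin n, i ≠ j → ∃ w : V3, w ≠ 0 ∧ f i w = 0 ∧ f j w = 0 := by
      intro i j hij
      have hsum := Submodule.finrank_sup_add_finrank_inf_eq (W i) (W j)
      have hsup : Module.finrank ℝ ↥(W i ⊔ W j) ≤ 3 := by
        have hs := Submodule.finrank_le (W i ⊔ W j)
        rwa [h3] at hs
      rw [hdim i, hdim j] at hsum
      have hinf : 0 < Module.finrank ℝ ↥(W i ⊓ W j) := by omega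
      have hbne : W i ⊓ W j ≠ ⊥ := by
        intro hb
        rw [hb, finrank_bot] at hinf
        omega
      obtain ⟨w, hw, hw0⟩ := Submodule.ne_bot_iff _ |>.mp hbne
      obtain ⟨hwi, hwj⟩ := Submodule.mem_inf.mp hw
      exact ⟨w, hw0, (hmemW i w).mp hwi, (hmemW j w).mp hwj⟩
    have hC : ∀ i j : Fin n, i ≠ j → ∃ u : V3, f i u = 0 ∧ f j u ≠ 0 := by
      intro i j hij
      have hle : ¬(W i ≤ W j) := by
        intro hle
        exact hij (hinj (Submodule.eq_of_le_of_finrank_eq hle (by rw [hdim i, hdim j])))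
      obtain ⟨u, hui, huj⟩ := Set.not_subset.mp (fun h => hle h)
      refine ⟨u, (hmemW i u).mp hui, ?_⟩
      intro h0
      exact huj ((hmemW j u).mpr h0)
    have hD : ∀ i j k : Fin n, i ≠ j → j ≠ k → i ≠ k →
        ∀ v : V3, f i v = 0 → f j v = 0 → f k v = 0 → v = 0 := by
      intro i j k hij hjk hik v h1 h2 h3'
      by_contra hv0
      exact hgen i j k hij hjk hik
        ⟨v, hv0, (hmemW i v).mpr h1, (hmemW j v).mpr h2, (hmemW k v).mpr h3'⟩
    have hN : Ncnt ⊤ f = n * n - n + 2 := Ncnt_top f hA hB hC hD hn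
    rw [Ncnt] at hN
    rw [hmain, Nat.card_prod] at hN
    have hcb : Nat.card Bool = 2 := by
      rw [Nat.card_eq_fintype_card]
      exact Fintype.card_bool
    rw [hcb] at hN
    -- final arithmetic
    have e1 : n * n = n * (n - 1) + n := by
      rcases n with _ | m
      · simp
      · simp only [Nat.succ_sub_one]
        ring
    have hle : n ≤ n * n := Nat.le_mul_of_pos_left n hn
    omega
end
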